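/- arXiv:2403.08553 — 6 statements merged into one kernel-verified Lean document; each statement's English description precedes it below -/
import Mathlib

section
/- Let A ∈ ℝ^{n×n}, B ∈ ℝ^{n×m}, and K ∈ ℝ^{m×n} be such that the spectral radius ρ(A+BK) < 1. Let Q ∈ ℝ^{n×n} be symmetric positive definite, and let P ∈ ℝ^{n×n} be a symmetric positive semidefinite matrix solving the Lyapunov equation P = (A+BK)ᵀ P (A+BK) + Q. Let G ∈ ℝ^{m×n} with BG ≠ 0, and let η be a real number with 0 ≤ η ≤ λ_min(Q) / (2 λ_max(P) ‖BG‖). Then ρ(A + B(K + ηG)) < 1, i.e., K + ηG is a stabilizing controller. -/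
open Matrix
open scoped Matrix.Norms.L2Operator

/-- `ρ(M) < 1`: every complex eigenvalue of the real square matrix `M`
(i.e. every element of the spectrum of `M` viewed as a complex matrix)
has modulus `< 1`. -/
def SpecRadiusLtOne {n : ℕ} (M : Matrix (Fin n) (Fin n) ℝ) : Prop :=
  ∀ z ∈ spectrum ℂ (M.map (algebraMap ℝ ℂ)), ‖z‖ < 1

/-!
`V(x) = xᵀ P x` is a Lyapunov function for `M = A + BK`: `V(Mx) = V(x) - xᵀ Q x`.
In the seminorm `√V`, the perturbation `η BG` moves `Mx` by at most
`η ‖BG‖ √(λ_max(P)) ‖x‖`, whereas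
`√V(x) - √V(Mx) > xᵀ Q x / (2 √V(x)) ≥ λ_min(Q) ‖x‖ / (2 √λ_max(P))`.
The step-size bound makes the first at most the second, so `V` still strictly decreases
along `A + B(K + ηG)`. A strict Lyapunov function excludes eigenvalues `z` with `|z| ≥ 1`:
on a complex eigenvector `v`, the sum of `V` over the real and imaginary parts of `v`
gets multiplied by `|z|²`.
-/

theorem Real.sqrt_sub_add_lt_sqrt {p δ b : ℝ} (hδ : 0 < δ) (hδp : δ ≤ p)
    (hb : 4 * p * b ^ 2 ≤ δ ^ 2) : √(p - δ) + b < √p := by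
  have hs : √p ^ 2 = p := Real.sq_sqrt (hδ.le.trans hδp)
  have ht : √(p - δ) ^ 2 = p - δ := Real.sq_sqrt (sub_nonneg.mpr hδp)
  have hs0 : 0 < √p := Real.sqrt_pos.mpr (hδ.trans_le hδp)
  have hts : √(p - δ) < √p := Real.sqrt_lt_sqrt (sub_nonneg.mpr hδp) (by linarith)
  have h2sb : 2 * √p * b ≤ δ := (abs_le_of_sq_le_sq' (by nlinarith) hδ.le).2
  -- `δ = (√p - √(p - δ)) (√p + √(p - δ)) < 2 √p (√p - √(p - δ))`
  nlinarith [mul_pos hs0 (sub_pos.mpr hts), Real.sqrt_nonneg (p - δ)]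

namespace Matrix

variable {ι : Type*} [Fintype ι]

theorem dotProduct_mulVec_self_le_l2_opNorm_sq {κ : Type*} [Fintype κ] [DecidableEq κ]
    (T : Matrix ι κ ℝ) (x : κ → ℝ) :
    (T *ᵥ x) ⬝ᵥ (T *ᵥ x) ≤ ‖T‖ ^ 2 * (x ⬝ᵥ x) := by
  have h := pow_le_pow_left₀ (norm_nonneg _) (T.l2_opNorm_mulVec (WithLp.toLp 2 x)) 2
  rwa [mul_pow, ← real_inner_self_eq_norm_sq (WithLp.toLp 2 x),
    ← real_inner_self_eq_norm_sq] at h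

section Rayleigh

open scoped MatrixOrder

variable [DecidableEq ι] {S : Matrix ι ι ℝ}

theorem IsHermitian.dotProduct_mulVec_le_iSup_eigenvalues_mul (hS : S.IsHermitian)
    (x : ι → ℝ) : x ⬝ᵥ S *ᵥ x ≤ (⨆ i, hS.eigenvalues i) * (x ⬝ᵥ x) := by
  have hle : S ≤ algebraMap ℝ (Matrix ι ι ℝ) (⨆ i, hS.eigenvalues i) := by
    rw [le_algebraMap_iff_spectrum_le (ha := hS.isSelfAdjoint),
      hS.spectrum_real_eq_range_eigenvalues]
    rintro _ ⟨i, rfl⟩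
    exact le_ciSup (Set.finite_range _).bddAbove i
  simpa [sub_mulVec, Algebra.algebraMap_eq_smul_one, smul_mulVec] using
    (le_iff.mp hle).dotProduct_mulVec_nonneg x

theorem IsHermitian.iInf_eigenvalues_mul_le_dotProduct_mulVec (hS : S.IsHermitian)
    (x : ι → ℝ) : (⨅ i, hS.eigenvalues i) * (x ⬝ᵥ x) ≤ x ⬝ᵥ S *ᵥ x := by
  have hle : algebraMap ℝ (Matrix ι ι ℝ) (⨅ i, hS.eigenvalues i) ≤ S := by
    rw [algebraMap_le_iff_le_spectrum (ha := hS.isSelfAdjoint),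
      hS.spectrum_real_eq_range_eigenvalues]
    rintro _ ⟨i, rfl⟩
    exact ciInf_le (Set.finite_range _).bddBelow i
  simpa [sub_mulVec, Algebra.algebraMap_eq_smul_one, smul_mulVec] using
    (le_iff.mp hle).dotProduct_mulVec_nonneg x

end Rayleigh

theorem PosSemidef.dotProduct_mulVec_self_nonneg {P : Matrix ι ι ℝ} (hP : P.PosSemidef)
    (x : ι → ℝ) : 0 ≤ x ⬝ᵥ P *ᵥ x := by
  simpa using hP.dotProduct_mulVec_nonneg x

theorem PosSemidef.sqrt_dotProduct_mulVec_add_le {P : Matrix ι ι ℝ} (hP : P.PosSemidef)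
    (u w : ι → ℝ) :
    √((u + w) ⬝ᵥ P *ᵥ (u + w)) ≤ √(u ⬝ᵥ P *ᵥ u) + √(w ⬝ᵥ P *ᵥ w) := by
  have h := @norm_add_le (ι → ℝ) (P.toSeminormedAddCommGroup hP).toSeminormedAddGroup u w
  change √(RCLike.re ((P *ᵥ (u + w)) ⬝ᵥ star (u + w))) ≤
    √(RCLike.re ((P *ᵥ u) ⬝ᵥ star u)) + √(RCLike.re ((P *ᵥ w) ⬝ᵥ star w)) at h
  simpa only [dotProduct_comm _ (P *ᵥ _), star_trivial, RCLike.re_to_real] using h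

theorem dotProduct_mulVec_eq_sub_of_lyapunov {M P Q : Matrix ι ι ℝ}
    (hLyap : P = Mᵀ * P * M + Q) (x : ι → ℝ) :
    (M *ᵥ x) ⬝ᵥ P *ᵥ (M *ᵥ x) = x ⬝ᵥ P *ᵥ x - x ⬝ᵥ Q *ᵥ x := by
  rw [← dotProduct_sub, ← sub_mulVec, ← eq_sub_of_add_eq hLyap.symm, ← mulVec_mulVec,
    ← mulVec_mulVec, dotProduct_mulVec x, vecMul_transpose]

theorem dotProduct_mulVec_add_smul_lt_of_lyapunov [DecidableEq ι] {M Δ P Q : Matrix ι ι ℝ}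
    (hP : P.PosSemidef) (hQ : Q.PosDef) (hLyap : P = Mᵀ * P * M + Q) {η : ℝ} (hη0 : 0 ≤ η)
    (hη : η * (2 * (⨆ i, hP.isHermitian.eigenvalues i) * ‖Δ‖) ≤
      ⨅ i, hQ.isHermitian.eigenvalues i)
    {x : ι → ℝ} (hx : x ≠ 0) :
    ((M + η • Δ) *ᵥ x) ⬝ᵥ P *ᵥ ((M + η • Δ) *ᵥ x) < x ⬝ᵥ P *ᵥ x := by
  set L := ⨆ i, hP.isHermitian.eigenvalues i
  set μ := ⨅ i, hQ.isHermitian.eigenvalues i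
  set p := x ⬝ᵥ P *ᵥ x
  set q := x ⬝ᵥ Q *ᵥ x
  set N := x ⬝ᵥ x
  set w := (η • Δ) *ᵥ x
  have hL : 0 ≤ L := Real.iSup_nonneg hP.eigenvalues_nonneg
  have hN : 0 ≤ N := dotProduct_self_star_nonneg x
  have hq : 0 < q := by simpa using hQ.dotProduct_mulVec_pos hx
  have hMx : (M *ᵥ x) ⬝ᵥ P *ᵥ (M *ᵥ x) = p - q :=
    dotProduct_mulVec_eq_sub_of_lyapunov hLyap x
  have hqp : q ≤ p := by linarith [hMx ▸ hP.dotProduct_mulVec_self_nonneg (M *ᵥ x)]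
  have hw : w ⬝ᵥ P *ᵥ w ≤ L * (‖η • Δ‖ ^ 2 * N) :=
    (hP.isHermitian.dotProduct_mulVec_le_iSup_eigenvalues_mul w).trans
      (mul_le_mul_of_nonneg_left (dotProduct_mulVec_self_le_l2_opNorm_sq _ x) hL)
  have hstep : 4 * p * (L * (‖η • Δ‖ ^ 2 * N)) ≤ q ^ 2 := by
    rw [norm_smul, Real.norm_of_nonneg hη0]
    calc 4 * p * (L * ((η * ‖Δ‖) ^ 2 * N))
        ≤ 4 * (L * N) * (L * ((η * ‖Δ‖) ^ 2 * N)) := by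
          gcongr
          exact hP.isHermitian.dotProduct_mulVec_le_iSup_eigenvalues_mul x
      _ = (η * (2 * L * ‖Δ‖) * N) ^ 2 := by ring
      _ ≤ (μ * N) ^ 2 := by gcongr
      _ ≤ q ^ 2 := by
          gcongr
          · exact mul_nonneg (Real.iInf_nonneg fun i => (hQ.eigenvalues_pos i).le) hN
          · exact hQ.isHermitian.iInf_eigenvalues_mul_le_dotProduct_mulVec x
  rw [← Real.sqrt_lt_sqrt_iff (hP.dotProduct_mulVec_self_nonneg _)]
  calc √(((M + η • Δ) *ᵥ x) ⬝ᵥ P *ᵥ ((M + η • Δ) *ᵥ x))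
      ≤ √((M *ᵥ x) ⬝ᵥ P *ᵥ (M *ᵥ x)) + √(w ⬝ᵥ P *ᵥ w) := by
        rw [add_mulVec]
        exact hP.sqrt_dotProduct_mulVec_add_le _ _
    _ ≤ √(p - q) + √(L * (‖η • Δ‖ ^ 2 * N)) := by
        rw [hMx]
        gcongr
    _ < √p := Real.sqrt_sub_add_lt_sqrt hq hqp <| by
        rwa [Real.sq_sqrt (by positivity)]

theorem exists_mulVec_eq_smul_of_mem_spectrum [DecidableEq ι] {M : Matrix ι ι ℂ} {z : ℂ}
    (hz : z ∈ spectrum ℂ M) : ∃ v : ι → ℂ, v ≠ 0 ∧ M *ᵥ v = z • v := by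
  rw [← spectrum_toLin', ← Module.End.hasEigenvalue_iff_mem_spectrum] at hz
  obtain ⟨v, hv⟩ := hz.exists_hasEigenvector
  exact ⟨v, hv.2, by simpa using hv.apply_eq_smul⟩

theorem re_comp_map_mulVec (M : Matrix ι ι ℝ) (v : ι → ℂ) :
    Complex.re ∘ (M.map (algebraMap ℝ ℂ) *ᵥ v) = M *ᵥ (Complex.re ∘ v) := by
  ext i
  simp [mulVec, dotProduct, Complex.re_sum]

theorem im_comp_map_mulVec (M : Matrix ι ι ℝ) (v : ι → ℂ) :
    Complex.im ∘ (M.map (algebraMap ℝ ℂ) *ᵥ v) = M *ᵥ (Complex.im ∘ v) := by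
  ext i
  simp [mulVec, dotProduct, Complex.im_sum]

theorem re_star_dotProduct_map_mulVec (T : Matrix ι ι ℝ) (v : ι → ℂ) :
    (star v ⬝ᵥ T.map (algebraMap ℝ ℂ) *ᵥ v).re =
      (Complex.re ∘ v) ⬝ᵥ T *ᵥ (Complex.re ∘ v) +
        (Complex.im ∘ v) ⬝ᵥ T *ᵥ (Complex.im ∘ v) := by
  simp only [dotProduct, mulVec, Complex.re_sum, Finset.mul_sum, ← Finset.sum_add_distrib]
  refine Finset.sum_congr rfl fun i _ => Finset.sum_congr rfl fun j _ => ?_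
  simp [Complex.mul_re, Complex.mul_im]

end Matrix

theorem specRadiusLtOne_of_lyapunov {n : ℕ} {M P : Matrix (Fin n) (Fin n) ℝ}
    (hP : P.PosSemidef)
    (hM : ∀ x, x ≠ 0 → (M *ᵥ x) ⬝ᵥ P *ᵥ (M *ᵥ x) < x ⬝ᵥ P *ᵥ x) :
    SpecRadiusLtOne M := by
  intro z hz
  obtain ⟨v, hv, hMv⟩ := exists_mulVec_eq_smul_of_mem_spectrum hz
  set V : (Fin n → ℂ) → ℝ := fun v => (star v ⬝ᵥ P.map (algebraMap ℝ ℂ) *ᵥ v).re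
    with hV
  have hM_le (x : Fin n → ℝ) : (M *ᵥ x) ⬝ᵥ P *ᵥ (M *ᵥ x) ≤ x ⬝ᵥ P *ᵥ x := by
    rcases eq_or_ne x 0 with rfl | hx
    · simp
    · exact (hM x hx).le
  have hdecr : V (M.map (algebraMap ℝ ℂ) *ᵥ v) < V v := by
    simp only [hV, re_star_dotProduct_map_mulVec, re_comp_map_mulVec, im_comp_map_mulVec]
    by_cases hre : Complex.re ∘ v = 0
    · have him : Complex.im ∘ v ≠ 0 := fun him =>
        hv (funext fun i => Complex.ext (congrFun hre i) (congrFun him i))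
      exact add_lt_add_of_le_of_lt (hM_le _) (hM _ him)
    · exact add_lt_add_of_lt_of_le (hM _ hre) (hM_le _)
  have hscale : V (M.map (algebraMap ℝ ℂ) *ᵥ v) = ‖z‖ ^ 2 * V v := by
    simp only [hV, hMv, star_smul, smul_dotProduct, mulVec_smul, dotProduct_smul,
      smul_eq_mul, ← mul_assoc]
    rw [Complex.star_def, Complex.mul_conj', ← Complex.ofReal_pow, Complex.re_ofReal_mul]
  have hV_nonneg : 0 ≤ V v := by
    simp only [hV, re_star_dotProduct_map_mulVec]
    exact add_nonneg (hP.dotProduct_mulVec_self_nonneg _) (hP.dotProduct_mulVec_self_nonneg _)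
  have hz2 : ‖z‖ ^ 2 < 1 := by nlinarith
  nlinarith [norm_nonneg z]

theorem stability_certificate_general
    {n m : ℕ}
    (A : Matrix (Fin n) (Fin n) ℝ) (B : Matrix (Fin n) (Fin m) ℝ)
    (K G : Matrix (Fin m) (Fin n) ℝ)
    (Q P : Matrix (Fin n) (Fin n) ℝ)
    (hQ : Q.PosDef) (hP : P.PosSemidef)
    (hLyap : P = (A + B * K)ᵀ * P * (A + B * K) + Q)
    (η : ℝ)
    (hη0 : 0 ≤ η)
    (hη1 : η ≤ (⨅ i, hQ.isHermitian.eigenvalues i) /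
      (2 * (⨆ i, hP.isHermitian.eigenvalues i) * ‖B * G‖)) :
    SpecRadiusLtOne (A + B * (K + η • G)) := by
  have hμ : 0 ≤ ⨅ i, hQ.isHermitian.eigenvalues i :=
    Real.iInf_nonneg fun i => (hQ.eigenvalues_pos i).le
  have hL : 0 ≤ ⨆ i, hP.isHermitian.eigenvalues i := Real.iSup_nonneg hP.eigenvalues_nonneg
  have hstep := mul_le_of_le_div₀ hμ (by positivity) hη1
  rw [Matrix.mul_add, Matrix.mul_smul, ← add_assoc]
  exact specRadiusLtOne_of_lyapunov hP fun x hx =>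
    dotProduct_mulVec_add_smul_lt_of_lyapunov hP hQ hLyap hη0 hstep hx

/-- **Stability certificate** (Lemma 4.1 of Talebi–Mesbahi / Lemma 1):
if `P ⪰ 0` solves the Lyapunov equation `P = (A+BK)ᵀ P (A+BK) + Q` with `Q ≻ 0`
and `ρ(A+BK) < 1`, then for any direction `G` with `BG ≠ 0` and any step size
`0 ≤ η ≤ λ_min(Q) / (2 λ_max(P) ‖BG‖)`, the controller `K + ηG` is stabilizing. -/
theorem stability_certificate
    {n m : ℕ}
    (A : Matrix (Fin n) (Fin n) ℝ) (B : Matrix (Fin n) (Fin m) ℝ)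
    (K G : Matrix (Fin m) (Fin n) ℝ)
    (Q P : Matrix (Fin n) (Fin n) ℝ)
    (hQ : Q.PosDef) (hP : P.PosSemidef)
    (hstab : SpecRadiusLtOne (A + B * K))
    (hLyap : P = (A + B * K)ᵀ * P * (A + B * K) + Q)
    (hBG : B * G ≠ 0)
    (η : ℝ)
    (hη0 : 0 ≤ η)
    (hη1 : η ≤ (⨅ i, hQ.isHermitian.eigenvalues i) /
      (2 * (⨆ i, hP.isHermitian.eigenvalues i) * ‖B * G‖)) :
    SpecRadiusLtOne (A + B * (K + η • G)) :=
  stability_certificate_general A B K G Q P hQ hP hLyap η hη0 hη1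
end

section
/- Let A ∈ ℝ^{n×n}, B ∈ ℝ^{n×m}, and let (K_t)_{t≥1} ⊂ ℝ^{m×n} be a (κ,γ)-sequentially strongly stable sequence for (A,B), witnessed by invertible matrices H_t and matrices L_t. Let W ∈ ℝ^{n×n}, and let (X_t)_{t≥1} and (X^s_t)_{t≥1} be sequences of n×n matrices satisfying X_{t+1} = (A+BK_t) X_t (A+BK_t)ᵀ + W and X^s_t = (A+BK_t) X^s_t (A+BK_t)ᵀ + W for all t ≥ 1. Then for every t ≥ 1: ‖X_t − X^s_t‖ ≤ exp(−(t−1)γ) κ² ‖X_1 − X^s_1‖ + κ² Σ_{i=0}^{t−2} (1 − γ/2)^{2i} ‖X^s_{t−i} − X^s_{t−1−i}‖. -/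
/-!
The error `E_t = X_t - X^s_t` satisfies `E_{t+1} = A_t E_t A_tᵀ + (X^s_t - X^s_{t+1})` with
`A_t = A + BK_t = H_t L_t H_t⁻¹`. In the coordinates `G_t = H_t⁻¹ E_t H_t⁻ᵀ` this reads
`G_{t+1} = P_t (L_t G_t L_tᵀ) P_tᵀ + H_{t+1}⁻¹ (X^s_t - X^s_{t+1}) H_{t+1}⁻ᵀ` with
`P_t = H_{t+1}⁻¹ H_t`, and `‖P_t‖ ‖L_t‖ ≤ (1 + γ/2)(1 - γ) ≤ 1 - γ/2`. So `‖G_t‖` obeys a linear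
recursion with contraction factor `(1 - γ/2)² ≤ exp(-γ)`; unrolling it and passing back from
`G` to `E` costs the factor `‖H_t‖² ‖H_1⁻¹‖² ≤ κ²`.
-/

open Matrix
open scoped Matrix.Norms.L2Operator

namespace Matrix

variable {m n : Type*} [Fintype m] [Fintype n] [DecidableEq m] [DecidableEq n]

lemma l2_opNorm_transpose (A : Matrix m n ℝ) : ‖Aᵀ‖ = ‖A‖ := by
  rw [← conjTranspose_eq_transpose_of_trivial, l2_opNorm_conjTranspose]

lemma l2_opNorm_mul_mul_transpose_le (P : Matrix m n ℝ) (M : Matrix n n ℝ) :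
    ‖P * M * Pᵀ‖ ≤ ‖P‖ ^ 2 * ‖M‖ :=
  calc ‖P * M * Pᵀ‖ ≤ ‖P‖ * ‖M‖ * ‖Pᵀ‖ :=
        (l2_opNorm_mul _ _).trans (by gcongr; exact l2_opNorm_mul _ _)
    _ = ‖P‖ ^ 2 * ‖M‖ := by rw [l2_opNorm_transpose]; ring

noncomputable def inCoords (H E : Matrix n n ℝ) : Matrix n n ℝ := H⁻¹ * E * H⁻¹ᵀ

lemma l2_opNorm_le_of_inCoords {H : Matrix n n ℝ} (hH : IsUnit H.det) (E : Matrix n n ℝ) :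
    ‖E‖ ≤ ‖H‖ ^ 2 * ‖inCoords H E‖ := by
  have hE : H * inCoords H E * Hᵀ = E := by
    rw [inCoords, Matrix.mul_assoc, Matrix.mul_assoc, ← transpose_mul, mul_nonsing_inv _ hH,
      transpose_one, Matrix.mul_one, ← Matrix.mul_assoc, mul_nonsing_inv _ hH, Matrix.one_mul]
  calc ‖E‖ = ‖H * inCoords H E * Hᵀ‖ := by rw [hE]
    _ ≤ ‖H‖ ^ 2 * ‖inCoords H E‖ := l2_opNorm_mul_mul_transpose_le _ _

lemma l2_opNorm_inCoords_le (H E : Matrix n n ℝ) : ‖inCoords H E‖ ≤ ‖H⁻¹‖ ^ 2 * ‖E‖ :=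
  l2_opNorm_mul_mul_transpose_le _ _

lemma l2_opNorm_inCoords_step_le (H H' L E D : Matrix n n ℝ) :
    ‖inCoords H' (H * L * H⁻¹ * E * (H * L * H⁻¹)ᵀ + D)‖ ≤
      (‖H'⁻¹ * H‖ * ‖L‖) ^ 2 * ‖inCoords H E‖ + ‖H'⁻¹‖ ^ 2 * ‖D‖ := by
  have hsplit : inCoords H' (H * L * H⁻¹ * E * (H * L * H⁻¹)ᵀ + D) =
      (H'⁻¹ * H) * (L * inCoords H E * Lᵀ) * (H'⁻¹ * H)ᵀ + inCoords H' D := by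
    simp only [inCoords, transpose_mul, Matrix.mul_add, Matrix.add_mul, Matrix.mul_assoc]
  rw [hsplit]
  calc _ ≤ ‖H'⁻¹ * H‖ ^ 2 * (‖L‖ ^ 2 * ‖inCoords H E‖) + ‖H'⁻¹‖ ^ 2 * ‖D‖ := by
        refine (norm_add_le _ _).trans (add_le_add ?_ (l2_opNorm_inCoords_le _ _))
        exact (l2_opNorm_mul_mul_transpose_le _ _).trans
          (by gcongr; exact l2_opNorm_mul_mul_transpose_le _ _)
    _ = _ := by ring

lemma l2_opNorm_inCoords_sub_succ_le {M H H' L X X' S S' W : Matrix n n ℝ} {ρ c : ℝ}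
    (hM : M = H * L * H⁻¹) (hX : X' = M * X * Mᵀ + W) (hS : S = M * S * Mᵀ + W)
    (hρ : ‖H'⁻¹ * H‖ * ‖L‖ ≤ ρ) (hc : ‖H'⁻¹‖ ≤ c) :
    ‖inCoords H' (X' - S')‖ ≤ ρ ^ 2 * ‖inCoords H (X - S)‖ + c ^ 2 * ‖S' - S‖ := by
  have hE : X' - S' = M * (X - S) * Mᵀ + (S - S') := by
    rw [hX]
    nth_rewrite 2 [hS]
    noncomm_ring
  calc ‖inCoords H' (X' - S')‖
      ≤ (‖H'⁻¹ * H‖ * ‖L‖) ^ 2 * ‖inCoords H (X - S)‖ + ‖H'⁻¹‖ ^ 2 * ‖S - S'‖ := by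
        rw [hE, hM]; exact l2_opNorm_inCoords_step_le _ _ _ _ _
    _ ≤ ρ ^ 2 * ‖inCoords H (X - S)‖ + c ^ 2 * ‖S' - S‖ := by
        rw [norm_sub_rev]; gcongr

end Matrix

lemma le_pow_mul_add_sum_of_le_mul_add {g d : ℕ → ℝ} {a : ℝ} (ha : 0 ≤ a)
    (h : ∀ t, 1 ≤ t → g (t + 1) ≤ a * g t + d t) (s : ℕ) :
    g (s + 1) ≤ a ^ s * g 1 + ∑ i ∈ Finset.range s, a ^ i * d (s - i) := by
  induction s with
  | zero => simp
  | succ s ih =>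
    calc g (s + 1 + 1) ≤ a * g (s + 1) + d (s + 1) := h (s + 1) (by omega)
      _ ≤ a * (a ^ s * g 1 + ∑ i ∈ Finset.range s, a ^ i * d (s - i)) + d (s + 1) := by gcongr
      _ = a ^ (s + 1) * g 1 + ∑ i ∈ Finset.range (s + 1), a ^ i * d (s + 1 - i) := by
        rw [Finset.sum_range_succ', mul_add, Finset.mul_sum]
        simp only [Nat.add_sub_add_right, Nat.sub_zero, pow_succ', pow_zero, mul_assoc]
        ring

lemma mul_le_one_sub_half_of_le {p l γ : ℝ} (hp : p ≤ 1 + γ / 2) (hl0 : 0 ≤ l)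
    (hl : l ≤ 1 - γ) : p * l ≤ 1 - γ / 2 := by
  nlinarith [mul_le_mul_of_nonneg_right hp hl0, sq_nonneg γ]

lemma one_sub_half_pow_two_mul_le_exp {γ : ℝ} (hγ : γ ≤ 2) (k : ℕ) :
    (1 - γ / 2) ^ (2 * k) ≤ Real.exp (-k * γ) :=
  calc (1 - γ / 2) ^ (2 * k) = ((1 - γ / 2) ^ 2) ^ k := pow_mul _ _ _
    _ ≤ Real.exp (-γ) ^ k := by
        gcongr
        exact_mod_cast Real.one_sub_div_pow_le_exp_neg (n := 2) (by norm_num; exact hγ)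
    _ = Real.exp (-k * γ) := by rw [← Real.exp_nat_mul]; ring_nf

theorem covariance_tracking_of_sequentially_strongly_stable_general
    {n m : ℕ}
    (A : Matrix (Fin n) (Fin n) ℝ) (B : Matrix (Fin n) (Fin m) ℝ)
    (K : ℕ → Matrix (Fin m) (Fin n) ℝ)
    (H L : ℕ → Matrix (Fin n) (Fin n) ℝ)
    (κ γ α' β' : ℝ)
    (hγ1 : γ ≤ 1)
    (hκdef : κ = β' / α')
    (hHunit : ∀ t, 1 ≤ t → IsUnit (H t).det)
    (hfact : ∀ t, 1 ≤ t → A + B * K t = H t * L t * (H t)⁻¹)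
    (hL : ∀ t, 1 ≤ t → ‖L t‖ ≤ 1 - γ)
    (hH : ∀ t, 1 ≤ t → ‖H t‖ ≤ β')
    (hHinv : ∀ t, 1 ≤ t → ‖(H t)⁻¹‖ ≤ 1 / α')
    (hHH : ∀ t, 1 ≤ t → ‖(H (t + 1))⁻¹ * H t‖ ≤ 1 + γ / 2)
    (W : Matrix (Fin n) (Fin n) ℝ)
    (X Xs : ℕ → Matrix (Fin n) (Fin n) ℝ)
    (hX : ∀ t, 1 ≤ t → X (t + 1) = (A + B * K t) * X t * (A + B * K t)ᵀ + W)
    (hXs : ∀ t, 1 ≤ t → Xs t = (A + B * K t) * Xs t * (A + B * K t)ᵀ + W) :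
    ∀ t, 1 ≤ t → ‖X t - Xs t‖ ≤
      Real.exp (-((t : ℝ) - 1) * γ) * κ ^ 2 * ‖X 1 - Xs 1‖ +
      κ ^ 2 * ∑ i ∈ Finset.range (t - 1),
        (1 - γ / 2) ^ (2 * i) * ‖Xs (t - i) - Xs (t - 1 - i)‖ := by
  intro t ht
  obtain ⟨s, rfl⟩ := Nat.exists_eq_add_of_le' ht
  set G := fun t => inCoords (H t) (X t - Xs t)
  have hG_step : ∀ t, 1 ≤ t →
      ‖G (t + 1)‖ ≤ (1 - γ / 2) ^ 2 * ‖G t‖ + (1 / α') ^ 2 * ‖Xs (t + 1) - Xs t‖ := by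
    intro t ht
    exact l2_opNorm_inCoords_sub_succ_le (hfact t ht) (hX t ht) (hXs t ht)
      (mul_le_one_sub_half_of_le (hHH t ht) (norm_nonneg _) (hL t ht)) (hHinv (t + 1) (by omega))
  have hG1 : ‖G 1‖ ≤ (1 / α') ^ 2 * ‖X 1 - Xs 1‖ :=
    (l2_opNorm_inCoords_le _ _).trans (by gcongr; exact hHinv 1 le_rfl)
  have hGs := le_pow_mul_add_sum_of_le_mul_add (g := fun t => ‖G t‖)
    (d := fun t => (1 / α') ^ 2 * ‖Xs (t + 1) - Xs t‖) (sq_nonneg _) hG_step s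
  have hsum : ∑ i ∈ Finset.range s, ((1 - γ / 2) ^ 2) ^ i * ‖Xs (s - i + 1) - Xs (s - i)‖ =
      ∑ i ∈ Finset.range s, (1 - γ / 2) ^ (2 * i) * ‖Xs (s + 1 - i) - Xs (s - i)‖ :=
    Finset.sum_congr rfl fun i hi => by
      rw [← pow_mul, Nat.sub_add_comm (Finset.mem_range_le hi)]
  simp only [Nat.cast_add, Nat.cast_one, add_sub_cancel_right, Nat.add_sub_cancel]
  calc ‖X (s + 1) - Xs (s + 1)‖ ≤ β' ^ 2 * ‖G (s + 1)‖ :=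
        (l2_opNorm_le_of_inCoords (hHunit _ ht) _).trans (by gcongr; exact hH _ ht)
    _ ≤ β' ^ 2 * (((1 - γ / 2) ^ 2) ^ s * ((1 / α') ^ 2 * ‖X 1 - Xs 1‖) +
          ∑ i ∈ Finset.range s,
            ((1 - γ / 2) ^ 2) ^ i * ((1 / α') ^ 2 * ‖Xs (s - i + 1) - Xs (s - i)‖)) := by
        gcongr
        exact hGs.trans (by gcongr)
    _ = (1 - γ / 2) ^ (2 * s) * κ ^ 2 * ‖X 1 - Xs 1‖ +
          κ ^ 2 * ∑ i ∈ Finset.range s,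
            (1 - γ / 2) ^ (2 * i) * ‖Xs (s + 1 - i) - Xs (s - i)‖ := by
        rw [← hsum, hκdef, pow_mul, mul_add, Finset.mul_sum, Finset.mul_sum]
        congr 1
        · ring
        · exact Finset.sum_congr rfl fun _ _ => by ring
    _ ≤ _ := by
        gcongr
        exact one_sub_half_pow_two_mul_le_exp (by linarith) s

/-- **Lemma B.1**: for a `(κ,γ)`-sequentially strongly stable sequence of controllers
`K_t` (witnessed by `H_t, L_t` with `A + BK_t = H_t L_t H_t⁻¹`), the state covariances
`X_t` under the time-varying policy track the steady-state covariances `X^s_t`. -/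
theorem covariance_tracking_of_sequentially_strongly_stable
    {n m : ℕ}
    (A : Matrix (Fin n) (Fin n) ℝ) (B : Matrix (Fin n) (Fin m) ℝ)
    (K : ℕ → Matrix (Fin m) (Fin n) ℝ)
    (H L : ℕ → Matrix (Fin n) (Fin n) ℝ)
    (κ γ α' β' : ℝ)
    (hκ : 0 < κ) (hγ0 : 0 < γ) (hγ1 : γ ≤ 1)
    (hα' : 0 < α') (hβ' : 0 < β') (hκdef : κ = β' / α')
    (hHunit : ∀ t, 1 ≤ t → IsUnit (H t).det)
    (hfact : ∀ t, 1 ≤ t → A + B * K t = H t * L t * (H t)⁻¹)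
    (hL : ∀ t, 1 ≤ t → ‖L t‖ ≤ 1 - γ)
    (hK : ∀ t, 1 ≤ t → ‖K t‖ ≤ κ)
    (hH : ∀ t, 1 ≤ t → ‖H t‖ ≤ β')
    (hHinv : ∀ t, 1 ≤ t → ‖(H t)⁻¹‖ ≤ 1 / α')
    (hHH : ∀ t, 1 ≤ t → ‖(H (t + 1))⁻¹ * H t‖ ≤ 1 + γ / 2)
    (W : Matrix (Fin n) (Fin n) ℝ)
    (X Xs : ℕ → Matrix (Fin n) (Fin n) ℝ)
    (hX : ∀ t, 1 ≤ t → X (t + 1) = (A + B * K t) * X t * (A + B * K t)ᵀ + W)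
    (hXs : ∀ t, 1 ≤ t → Xs t = (A + B * K t) * Xs t * (A + B * K t)ᵀ + W) :
    ∀ t, 1 ≤ t → ‖X t - Xs t‖ ≤
      Real.exp (-((t : ℝ) - 1) * γ) * κ ^ 2 * ‖X 1 - Xs 1‖ +
      κ ^ 2 * ∑ i ∈ Finset.range (t - 1),
        (1 - γ / 2) ^ (2 * i) * ‖Xs (t - i) - Xs (t - 1 - i)‖ :=
  covariance_tracking_of_sequentially_strongly_stable_general A B K H L κ γ α' β' hγ1 hκdef hHunit
    hfact hL hH hHinv hHH W X Xs hX hXs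
end

section
/- Let (M, dist) be a metric space, let (x_t)_{t≥1} and (y_t)_{t≥1} be sequences in M, and let α ∈ (0,1) satisfy dist(x_{t+1}, y_t) ≤ α · dist(x_t, y_t) for all t ≥ 1. Then for every T ≥ 1: Σ_{t=1}^{T} dist(x_t, y_t) ≤ (1/(1−α)) · dist(x_1, y_1) + (1/(1−α)) · Σ_{j=1}^{T−1} dist(y_j, y_{j+1}). -/
/-- **Equation (A.14)** in the proof of Theorem 1: the cumulative tracking distance
is bounded by the initial distance plus the path-length of the comparator sequence,
each scaled by `1/(1-α)`. -/
theorem cumulative_tracking_distance_bound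
    {M : Type*} [MetricSpace M]
    (x y : ℕ → M) (α : ℝ) (hα0 : 0 < α) (hα1 : α < 1)
    (hcontr : ∀ t, 1 ≤ t → dist (x (t + 1)) (y t) ≤ α * dist (x t) (y t)) :
    ∀ T, 1 ≤ T →
      ∑ t ∈ Finset.Icc 1 T, dist (x t) (y t) ≤
        (1 / (1 - α)) * dist (x 1) (y 1) +
        (1 / (1 - α)) * ∑ j ∈ Finset.Icc 1 (T - 1), dist (y j) (y (j + 1)) := by
  have h1α : (0:ℝ) < 1 - α := by linarith
  -- key induction
  have key : ∀ T, 1 ≤ T →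
      (1 - α) * (∑ t ∈ Finset.Icc 1 T, dist (x t) (y t)) + α * dist (x T) (y T) ≤
        dist (x 1) (y 1) + ∑ j ∈ Finset.Icc 1 (T - 1), dist (y j) (y (j + 1)) := by
    intro T hT
    induction T, hT using Nat.le_induction with
    | base => simp; ring_nf; simp
    | succ n hn ih =>
      have hsum : ∑ t ∈ Finset.Icc 1 (n + 1), dist (x t) (y t)
          = (∑ t ∈ Finset.Icc 1 n, dist (x t) (y t)) + dist (x (n+1)) (y (n+1)) :=
        Finset.sum_Icc_succ_top (by omega) _
      have hn' : n - 1 + 1 = n := Nat.succ_pred_eq_of_pos hn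
      have hsum2 : ∑ j ∈ Finset.Icc 1 (n + 1 - 1), dist (y j) (y (j + 1))
          = (∑ j ∈ Finset.Icc 1 (n - 1), dist (y j) (y (j + 1))) + dist (y n) (y (n+1)) := by
        simp only [Nat.add_sub_cancel]
        conv_lhs => rw [← hn']
        rw [Finset.sum_Icc_succ_top (by omega), hn']
      have hd : dist (x (n+1)) (y (n+1)) ≤ α * dist (x n) (y n) + dist (y n) (y (n+1)) :=
        le_trans (dist_triangle _ (y n) _) (by
          have := hcontr n hn
          linarith)
      rw [hsum, hsum2]
      nlinarith [dist_nonneg (x := x (n+1)) (y := y (n+1))]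
  intro T hT
  have h := key T hT
  have hd : 0 ≤ α * dist (x T) (y T) := mul_nonneg hα0.le dist_nonneg
  rw [div_mul_eq_mul_div, div_mul_eq_mul_div, ← add_div, le_div_iff₀ h1α,
    mul_comm, one_mul, one_mul]
  linarith
end

section
/- Let (M, dist) be a metric space, let (x_t)_{t≥1} and (y_t)_{t≥1} be sequences in M, and let α ∈ (0,1) satisfy dist(x_{t+1}, y_t) ≤ α · dist(x_t, y_t) for all t ≥ 1. Then for every T ≥ 2: Σ_{t=1}^{T−1} dist(x_t, x_{t+1}) ≤ ((1+α)/(1−α)) · ( dist(x_1, y_1) + Σ_{j=1}^{T−1} dist(y_j, y_{j+1}) ). -/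
private lemma aux_sum_bound
    {M : Type*} [MetricSpace M]
    (x y : ℕ → M) (α : ℝ) (hα0 : 0 < α) (hα1 : α < 1)
    (hcontr : ∀ t, 1 ≤ t → dist (x (t + 1)) (y t) ≤ α * dist (x t) (y t)) :
    ∀ n, 1 ≤ n →
      (1 - α) * ∑ t ∈ Finset.Icc 1 n, dist (x t) (y t) + dist (x (n + 1)) (y (n + 1)) ≤
        dist (x 1) (y 1) + ∑ j ∈ Finset.Icc 1 n, dist (y j) (y (j + 1)) := by
  intro n hn
  induction n, hn using Nat.le_induction with
  | base =>
      simp only [Finset.Icc_self, Finset.sum_singleton]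
      have h1 : dist (x 2) (y 2) ≤ dist (x 2) (y 1) + dist (y 1) (y 2) := dist_triangle _ _ _
      have h2 := hcontr 1 le_rfl
      nlinarith [dist_nonneg (x := x 1) (y := y 1)]
  | succ n hn ih =>
      rw [Finset.sum_Icc_succ_top (by omega), Finset.sum_Icc_succ_top (by omega)]
      have h1 : dist (x (n + 2)) (y (n + 2)) ≤
          dist (x (n + 2)) (y (n + 1)) + dist (y (n + 1)) (y (n + 2)) := dist_triangle _ _ _
      have h2 := hcontr (n + 1) (by omega)
      nlinarith [dist_nonneg (x := x (n + 1)) (y := y (n + 1))]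

/-- **Combination of Equations (A.12) and (A.14)** in the proof of Theorem 1:
the path-length of the iterates is of the order of the path-length of the
comparator sequence. -/
theorem iterate_path_length_vs_comparator_path_length
    {M : Type*} [MetricSpace M]
    (x y : ℕ → M) (α : ℝ) (hα0 : 0 < α) (hα1 : α < 1)
    (hcontr : ∀ t, 1 ≤ t → dist (x (t + 1)) (y t) ≤ α * dist (x t) (y t)) :
    ∀ T, 2 ≤ T →
      ∑ t ∈ Finset.Icc 1 (T - 1), dist (x t) (x (t + 1)) ≤
        ((1 + α) / (1 - α)) *
          (dist (x 1) (y 1) + ∑ j ∈ Finset.Icc 1 (T - 1), dist (y j) (y (j + 1))) := by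
  intro T hT
  set n := T - 1 with hn
  have hn1 : 1 ≤ n := by omega
  have h1α : (0:ℝ) < 1 - α := by linarith
  -- step 1: each step length is bounded by (1+α) * dist (x t) (y t)
  have step1 : ∑ t ∈ Finset.Icc 1 n, dist (x t) (x (t + 1)) ≤
      (1 + α) * ∑ t ∈ Finset.Icc 1 n, dist (x t) (y t) := by
    rw [Finset.mul_sum]
    apply Finset.sum_le_sum
    intro t ht
    have ht1 : 1 ≤ t := (Finset.mem_Icc.mp ht).1
    have h1 : dist (x t) (x (t + 1)) ≤ dist (x t) (y t) + dist (x (t + 1)) (y t) :=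
      dist_triangle_right _ _ _
    have h2 := hcontr t ht1
    linarith
  -- step 2: geometric-sum bound
  have step2 := aux_sum_bound x y α hα0 hα1 hcontr n hn1
  have hd : 0 ≤ dist (x (n + 1)) (y (n + 1)) := dist_nonneg
  have step2' : ∑ t ∈ Finset.Icc 1 n, dist (x t) (y t) ≤
      (dist (x 1) (y 1) + ∑ j ∈ Finset.Icc 1 n, dist (y j) (y (j + 1))) / (1 - α) := by
    rw [le_div_iff₀ h1α]
    nlinarith
  calc ∑ t ∈ Finset.Icc 1 n, dist (x t) (x (t + 1))
      ≤ (1 + α) * ∑ t ∈ Finset.Icc 1 n, dist (x t) (y t) := step1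
    _ ≤ (1 + α) * ((dist (x 1) (y 1) + ∑ j ∈ Finset.Icc 1 n, dist (y j) (y (j + 1))) / (1 - α)) := by
        apply mul_le_mul_of_nonneg_left step2' (by linarith)
    _ = ((1 + α) / (1 - α)) * (dist (x 1) (y 1) + ∑ j ∈ Finset.Icc 1 n, dist (y j) (y (j + 1))) := by
        ring
end

section
/- Let (M, dist) be a metric space, let (x_t)_{t≥1} and (y_t)_{t≥1} be sequences in M, and let α ∈ (0, 1/√2) satisfy dist(x_{t+1}, y_t) ≤ α · dist(x_t, y_t) for all t ≥ 1. Let L_g > 0 and let h_1, …, h_T : M → ℝ be functions such that h_t(x_t) − h_t(y_t) ≤ (L_g/2) · dist(x_t, y_t)² for each t. Then for every T ≥ 3: Σ_{t=1}^{T} ( h_t(x_t) − h_t(y_t) ) ≤ (L_g/2) dist(x_1, y_1)² + L_g Σ_{t=2}^{T} dist(y_{t−1}, y_t)² + L_g ( dist(x_2, y_1)² − 2α² dist(x_T, y_{T−1})² ) / (1 − 2α²) + ( 2 L_g α² / (1 − 2α²) ) Σ_{t=2}^{T} dist(y_t, y_{t−1})². -/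
/-- **Equation (A.6)**, the bound on Term II in the regret decomposition of Theorem 1:
under the contraction `dist(x_{t+1}, y_t) ≤ α dist(x_t, y_t)` with `α ∈ (0, 1/√2)`
and the quadratic-growth property `h_t(x_t) - h_t(y_t) ≤ (L_g/2) dist(x_t, y_t)²`,
the cumulative sub-optimality is bounded by squared path-length terms. -/
theorem term_II_bound
    {M : Type*} [MetricSpace M]
    (x y : ℕ → M) (α : ℝ) (hα0 : 0 < α) (hα1 : α < 1 / Real.sqrt 2)
    (hcontr : ∀ t, 1 ≤ t → dist (x (t + 1)) (y t) ≤ α * dist (x t) (y t))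
    (Lg : ℝ) (hLg : 0 < Lg)
    (T : ℕ) (hT : 3 ≤ T)
    (h : ℕ → M → ℝ)
    (hquad : ∀ t, 1 ≤ t → t ≤ T → h t (x t) - h t (y t) ≤ Lg / 2 * dist (x t) (y t) ^ 2) :
    ∑ t ∈ Finset.Icc 1 T, (h t (x t) - h t (y t)) ≤
      Lg / 2 * dist (x 1) (y 1) ^ 2 +
      Lg * ∑ t ∈ Finset.Icc 2 T, dist (y (t - 1)) (y t) ^ 2 +
      Lg * (dist (x 2) (y 1) ^ 2 - 2 * α ^ 2 * dist (x T) (y (T - 1)) ^ 2) /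
        (1 - 2 * α ^ 2) +
      (2 * Lg * α ^ 2 / (1 - 2 * α ^ 2)) *
        ∑ t ∈ Finset.Icc 2 T, dist (y t) (y (t - 1)) ^ 2 := by
  have hs : (0:ℝ) < Real.sqrt 2 := Real.sqrt_pos.2 (by norm_num)
  have hsq : Real.sqrt 2 ^ 2 = 2 := Real.sq_sqrt (by norm_num)
  have h1' : α * Real.sqrt 2 < 1 := by
    rw [← lt_div_iff₀ hs]; exact hα1
  have hc : (0:ℝ) < 1 - 2 * α ^ 2 := by nlinarith [mul_pos hα0 hs]
  -- recurrence: a_{t+1}² ≤ 2α² a_t² + 2α² e_t²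
  have hrec : ∀ t, 2 ≤ t → dist (x (t+1)) (y t) ^ 2 ≤
      2*α^2 * dist (x t) (y (t-1)) ^ 2 + 2*α^2 * dist (y (t-1)) (y t) ^ 2 := by
    intro t ht
    have hco := hcontr t (by omega)
    have htri : dist (x t) (y t) ≤ dist (x t) (y (t-1)) + dist (y (t-1)) (y t) :=
      dist_triangle _ _ _
    have hsq1 : dist (x (t+1)) (y t) ^ 2 ≤ (α * dist (x t) (y t)) ^ 2 :=
      pow_le_pow_left₀ dist_nonneg hco 2
    have hsq2 : dist (x t) (y t) ^ 2 ≤ (dist (x t) (y (t-1)) + dist (y (t-1)) (y t)) ^ 2 :=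
      pow_le_pow_left₀ dist_nonneg htri 2
    nlinarith [sq_nonneg (dist (x t) (y (t-1)) - dist (y (t-1)) (y t)), sq_nonneg α,
      mul_le_mul_of_nonneg_left hsq2 (sq_nonneg α)]
  have hstep : ∀ (f : ℕ → ℝ) (b : ℕ), 1 ≤ b →
      ∑ t ∈ Finset.Icc 2 (b+1), f t = (∑ t ∈ Finset.Icc 2 b, f t) + f (b+1) := by
    intro f b hb
    exact Finset.sum_Icc_succ_top (by omega) f
  -- key geometric-sum bound
  have key : ∀ n, 2 ≤ n →
      (1 - 2*α^2) * ∑ t ∈ Finset.Icc 2 n, dist (x t) (y (t-1)) ^ 2 ≤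
        dist (x 2) (y 1) ^ 2
          + 2*α^2 * ∑ t ∈ Finset.Icc 2 (n-1), dist (y (t-1)) (y t) ^ 2
          - 2*α^2 * dist (x n) (y (n-1)) ^ 2 := by
    intro n hn
    induction n with
    | zero => omega
    | succ m ih =>
      rcases Nat.lt_or_ge m 2 with hm | hm
      · have hm1 : m = 1 := by omega
        subst hm1
        norm_num [Finset.Icc_self]
        nlinarith [sq_nonneg (dist (x 2) (y 1))]
      · obtain ⟨k, rfl⟩ : ∃ k, m = k + 2 := ⟨m - 2, by omega⟩
        have ih' := ih (by omega)
        have hr := hrec (k+2) (by omega)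
        rw [hstep (fun t => dist (x t) (y (t-1)) ^ 2) (k+2) (by omega)]
        simp only [show (k+2+1-1 : ℕ) = k+2 from by omega,
          show (k+2-1 : ℕ) = k+1 from by omega] at ih' hr ⊢
        have hE := hstep (fun t => dist (y (t-1)) (y t) ^ 2) (k+1) (by omega)
        simp only [show (k+1+1 : ℕ) = k+2 from by omega] at hE
        rw [hE]
        simp only [show (k+2-1 : ℕ) = k+1 from by omega]
        nlinarith [ih', hr]
  -- pointwise quadratic bound split
  have hsplit : Finset.Icc 1 T = insert 1 (Finset.Icc 2 T) := by
    ext z; simp only [Finset.mem_Icc, Finset.mem_insert]; omega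
  have h1notin : (1:ℕ) ∉ Finset.Icc 2 T := by simp
  have step1 : ∑ t ∈ Finset.Icc 1 T, (h t (x t) - h t (y t)) ≤
      Lg/2 * dist (x 1) (y 1) ^ 2 +
        ∑ t ∈ Finset.Icc 2 T, (Lg/2 * dist (x t) (y t) ^ 2) := by
    rw [hsplit, Finset.sum_insert h1notin]
    refine add_le_add (hquad 1 le_rfl (by omega)) (Finset.sum_le_sum fun t ht => ?_)
    rw [Finset.mem_Icc] at ht
    exact hquad t (by omega) ht.2
  have step2 : ∑ t ∈ Finset.Icc 2 T, (Lg/2 * dist (x t) (y t) ^ 2) ≤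
      Lg * (∑ t ∈ Finset.Icc 2 T, dist (x t) (y (t-1)) ^ 2) +
      Lg * (∑ t ∈ Finset.Icc 2 T, dist (y (t-1)) (y t) ^ 2) := by
    have heq : ∑ t ∈ Finset.Icc 2 T,
        (Lg * dist (x t) (y (t-1)) ^ 2 + Lg * dist (y (t-1)) (y t) ^ 2) =
        Lg * (∑ t ∈ Finset.Icc 2 T, dist (x t) (y (t-1)) ^ 2) +
        Lg * (∑ t ∈ Finset.Icc 2 T, dist (y (t-1)) (y t) ^ 2) := by
      rw [Finset.sum_add_distrib, Finset.mul_sum, Finset.mul_sum]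
    rw [← heq]
    refine Finset.sum_le_sum fun t ht => ?_
    have htri : dist (x t) (y t) ≤ dist (x t) (y (t-1)) + dist (y (t-1)) (y t) :=
      dist_triangle _ _ _
    have hsq2 : dist (x t) (y t) ^ 2 ≤ (dist (x t) (y (t-1)) + dist (y (t-1)) (y t)) ^ 2 :=
      pow_le_pow_left₀ dist_nonneg htri 2
    nlinarith [sq_nonneg (dist (x t) (y (t-1)) - dist (y (t-1)) (y t)), hLg.le,
      mul_le_mul_of_nonneg_left hsq2 hLg.le]
  -- assemble
  set S := ∑ t ∈ Finset.Icc 2 T, dist (x t) (y (t-1)) ^ 2 with hS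
  set E := ∑ t ∈ Finset.Icc 2 T, dist (y (t-1)) (y t) ^ 2 with hE
  have hE'le : ∑ t ∈ Finset.Icc 2 (T-1), dist (y (t-1)) (y t) ^ 2 ≤ E := by
    refine Finset.sum_le_sum_of_subset_of_nonneg
      (Finset.Icc_subset_Icc_right (by omega)) fun t _ _ => sq_nonneg _
  have keyT := key T (by omega)
  have step3 : (1 - 2*α^2) * S ≤
      dist (x 2) (y 1) ^ 2 + 2*α^2 * E - 2*α^2 * dist (x T) (y (T-1)) ^ 2 := by
    nlinarith [keyT, hE'le, sq_nonneg α]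
  have hEcomm : ∑ t ∈ Finset.Icc 2 T, dist (y t) (y (t-1)) ^ 2 = E :=
    Finset.sum_congr rfl fun t _ => by rw [dist_comm]
  have step4 : Lg * S ≤
      Lg * (dist (x 2) (y 1) ^ 2 - 2*α^2 * dist (x T) (y (T-1)) ^ 2) / (1 - 2*α^2)
        + (2 * Lg * α^2 / (1 - 2*α^2)) * E := by
    have heq : Lg * (dist (x 2) (y 1) ^ 2 - 2*α^2 * dist (x T) (y (T-1)) ^ 2) / (1 - 2*α^2)
        + (2 * Lg * α^2 / (1 - 2*α^2)) * E =
        Lg * ((dist (x 2) (y 1) ^ 2 + 2*α^2 * E - 2*α^2 * dist (x T) (y (T-1)) ^ 2)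
          / (1 - 2*α^2)) := by
      field_simp
      ring
    rw [heq]
    refine mul_le_mul_of_nonneg_left ?_ hLg.le
    rw [le_div_iff₀ hc]
    nlinarith [step3]
  rw [hEcomm]
  have stepsum := step2
  linarith [step1, step2, step4]
end

section
/- Let μ_g, L_g, L_H, c > 0 and α ∈ (0, 1/√2) be real numbers with L_g/μ_g > α/2. Let d > 0 satisfy d ≤ c / (L_g/μ_g − α/2) and d ≤ α μ_g³ / (L_H L_g²). Then for every real s with c μ_g / (L_g d) ≤ s ≤ 1: (1 − s)(L_g/μ_g) + (s² L_H L_g² / (2 μ_g³)) · d ≤ α. -/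
/-- **Step-size computation (B.19)** in the proof of the local convergence lemma
(Lemma B.2): for any step size `s` between the stability-certificate lower bound
`c μ_g / (L_g d)` and `1`, the Newton step contracts by the factor `α`. -/
theorem step_size_contraction
    (μg Lg LH c α : ℝ)
    (hμg : 0 < μg) (hLg : 0 < Lg) (hLH : 0 < LH) (hc : 0 < c)
    (hα0 : 0 < α) (hα1 : α < 1 / Real.sqrt 2)
    (hratio : α / 2 < Lg / μg)
    (d : ℝ) (hd0 : 0 < d)
    (hd1 : d ≤ c / (Lg / μg - α / 2))
    (hd2 : d ≤ α * μg ^ 3 / (LH * Lg ^ 2)) :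
    ∀ s : ℝ, c * μg / (Lg * d) ≤ s → s ≤ 1 →
      (1 - s) * (Lg / μg) + s ^ 2 * LH * Lg ^ 2 / (2 * μg ^ 3) * d ≤ α := by
  intro s hs1 hs2
  have hs0 : 0 < s :=
    lt_of_lt_of_le (div_pos (mul_pos hc hμg) (mul_pos hLg hd0)) hs1
  have hX : 0 < Lg / μg - α / 2 := by linarith
  have h1 : d * (Lg / μg - α / 2) ≤ c := (le_div_iff₀ hX).mp hd1
  have h1' : d * (2 * Lg - α * μg) ≤ 2 * c * μg := by
    have e : d * (2 * Lg - α * μg) = (d * (Lg / μg - α / 2)) * (2 * μg) := by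
      field_simp
    rw [e]
    nlinarith [mul_le_mul_of_nonneg_right h1 (by positivity : (0:ℝ) ≤ 2 * μg)]
  have h2 : d * (LH * Lg ^ 2) ≤ α * μg ^ 3 :=
    (le_div_iff₀ (by positivity)).mp hd2
  have h3 : c * μg ≤ s * (Lg * d) := (div_le_iff₀ (by positivity)).mp hs1
  have h4 : 2 * Lg - α * μg ≤ 2 * s * Lg := by nlinarith
  have hkey : (1 - s) * Lg * (2 * μg ^ 2) + s ^ 2 * LH * Lg ^ 2 * d ≤ α * (2 * μg ^ 3) := by
    have hs2' : s ^ 2 * (LH * Lg ^ 2 * d) ≤ s * (α * μg ^ 3) := by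
      have hsq : s ^ 2 ≤ s := by nlinarith
      nlinarith [mul_le_mul_of_nonneg_left h2 (sq_nonneg s),
        mul_le_mul_of_nonneg_right hsq (by positivity : (0:ℝ) ≤ α * μg ^ 3)]
    nlinarith [mul_le_mul_of_nonneg_left h4 (le_of_lt (mul_pos hμg hμg)),
      mul_le_mul_of_nonneg_right hs2 (by positivity : (0:ℝ) ≤ α * μg ^ 3)]
  have heq : (1 - s) * (Lg / μg) + s ^ 2 * LH * Lg ^ 2 / (2 * μg ^ 3) * d
      = ((1 - s) * Lg * (2 * μg ^ 2) + s ^ 2 * LH * Lg ^ 2 * d) / (2 * μg ^ 3) := by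
    field_simp
  rw [heq, div_le_iff₀ (by positivity)]
  linarith [hkey]
end
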